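/- arXiv:2303.00226 — 2 statements merged into one kernel-verified Lean document; each statement's English description precedes it below -/
import Mathlib

section
/- For every α, β, u₁, u₂, u₃ ∈ ZMod d, applying the generalized Pauli operator U_{α,β} to the second qudit, i.e. (I ⊗ U_{α,β} ⊗ I), sends the GHZ state Ψ_{u₁,u₂,u₃} to ω^{α·(u₂−β)} · Ψ_{u₁+α, u₂−β, u₃} (this is equation (12) of Theorem 1, with the global phase ω^{α·(u₂−β)} made explicit). -/
/-- ω = exp(2πi/d), the primitive d-th root of unity used throughout. -/
noncomputable def omega (d : ℕ) : ℂ := Complex.exp (2 * Real.pi * Complex.I / d)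

/-- The generalized three-qudit GHZ state Ψ_{u₁,u₂,u₃}, modeled as a function
`(ZMod d) × (ZMod d) × (ZMod d) → ℂ`. -/
noncomputable def GHZ3 (d : ℕ) (u₁ u₂ u₃ : ZMod d) :
    ZMod d × ZMod d × ZMod d → ℂ := fun p =>
  if p.2.1 = p.1 + u₂ ∧ p.2.2 = p.1 + u₃ then
    (1 / Real.sqrt d : ℂ) * omega d ^ (p.1 * u₁).val
  else 0

/-- The generalized Pauli operator `U_{α,β}` applied to the second qudit:
`f(j₁,j₂,j₃) ↦ ω^{j₂·α} f(j₁, j₂+β, j₃)`. -/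
noncomputable def pauliSnd (d : ℕ) (α β : ZMod d)
    (f : ZMod d × ZMod d × ZMod d → ℂ) : ZMod d × ZMod d × ZMod d → ℂ :=
  fun p => omega d ^ (p.2.1 * α).val * f (p.1, p.2.1 + β, p.2.2)

lemma omega_pow_d (d : ℕ) (hd : 0 < d) : omega d ^ d = 1 := by
  rw [omega, ← Complex.exp_nat_mul]
  have hdc : (d : ℂ) ≠ 0 := Nat.cast_ne_zero.mpr hd.ne'
  rw [mul_div_cancel₀ _ hdc]
  simpa [mul_comm] using Complex.exp_two_pi_mul_I

lemma omega_pow_mod (d : ℕ) (hd : 0 < d) (n : ℕ) :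
    omega d ^ (n % d) = omega d ^ n := by
  conv_rhs => rw [← Nat.div_add_mod n d]
  rw [pow_add, pow_mul, omega_pow_d d hd, one_pow, one_mul]

lemma omega_pow_val_add (d : ℕ) [NeZero d] (a b : ZMod d) :
    omega d ^ (a + b).val = omega d ^ a.val * omega d ^ b.val := by
  rw [ZMod.val_add, omega_pow_mod d (NeZero.pos d), pow_add]

/-- Equation (12) of Theorem 1, with the global phase `ω^{α·(u₂−β)}` made explicit:
`(I ⊗ U_{α,β} ⊗ I) Ψ_{u₁,u₂,u₃} = ω^{α·(u₂−β)} • Ψ_{u₁+α, u₂−β, u₃}`. -/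
theorem pauliSnd_GHZ3 (d : ℕ) (hd : 2 ≤ d) (α β u₁ u₂ u₃ : ZMod d) :
    pauliSnd d α β (GHZ3 d u₁ u₂ u₃) =
      (omega d ^ (α * (u₂ - β)).val) • GHZ3 d (u₁ + α) (u₂ - β) u₃ := by
  have : NeZero d := ⟨by omega⟩
  funext p
  obtain ⟨j₁, j₂, j₃⟩ := p
  simp only [pauliSnd, GHZ3, Pi.smul_apply, smul_eq_mul]
  have hcond : (j₂ + β = j₁ + u₂) ↔ (j₂ = j₁ + (u₂ - β)) := by
    constructor <;> intro h <;> linear_combination h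
  by_cases h : j₂ = j₁ + (u₂ - β) ∧ j₃ = j₁ + u₃
  · rw [if_pos ⟨hcond.mpr h.1, h.2⟩, if_pos h]
    obtain ⟨h1, -⟩ := h
    subst h1
    have key : omega d ^ ((j₁ + (u₂ - β)) * α).val * omega d ^ (j₁ * u₁).val =
        omega d ^ (α * (u₂ - β)).val * omega d ^ (j₁ * (u₁ + α)).val := by
      rw [← omega_pow_val_add, ← omega_pow_val_add]
      congr 1
      ring
    ring_nf
    ring_nf at key
    linear_combination ((1 : ℂ) / Real.sqrt d) * key
  · rw [if_neg, if_neg h]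
    · simp
    · intro hh; exact h ⟨hcond.mp hh.1, hh.2⟩
end

section
/- Let m ≥ 1 and let (α₁,β₁), …, (α_m,β_m) be pairs of elements of ZMod d. Applying the generalized Pauli operators U_{α₁,β₁}, …, U_{α_m,β_m} successively to the first qudit of the GHZ state Ψ_{u₁,u₂,u₃} yields c · Ψ_{u₁+Σ_j α_j, u₂+Σ_j β_j, u₃+Σ_j β_j} for some complex number c with |c| = 1. (This is the intermediate claim of the recovery phase: after the participants successively embed their values into the transmitted particle, the GHZ state's indices are shifted by the sums of the embedded values.) -/
/-- The generalized Pauli operator `U_{α,β}` applied to the first qudit: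
`f(j₁,j₂,j₃) ↦ ω^{j₁·α} f(j₁+β, j₂, j₃)`. -/
noncomputable def pauliFst (d : ℕ) (α β : ZMod d)
    (f : ZMod d × ZMod d × ZMod d → ℂ) : ZMod d × ZMod d × ZMod d → ℂ :=
  fun p => omega d ^ (p.1 * α).val * f (p.1 + β, p.2.1, p.2.2)

-- `2πi / 0 = 0` in Lean, so the degenerate case `d = 0` gives `ω = 1`.
lemma omega_zero : omega 0 = 1 := by
  simp [omega]

lemma norm_omega (d : ℕ) : ‖omega d‖ = 1 := by
  rcases eq_or_ne d 0 with rfl | hd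
  · simp [omega_zero]
  · exact (Complex.isPrimitiveRoot_exp d hd).norm'_eq_one hd

lemma omega_pow_val_add_s7 (d : ℕ) (x y : ZMod d) :
    omega d ^ (x + y).val = omega d ^ x.val * omega d ^ y.val := by
  rcases eq_or_ne d 0 with rfl | hd
  · simp [omega_zero]
  · have : NeZero d := ⟨hd⟩
    exact AddChar.map_add_eq_mul
      (AddChar.zmodChar d (Complex.isPrimitiveRoot_exp d hd).pow_eq_one) x y

lemma pauliFst_smul (d : ℕ) (α β : ZMod d) (c : ℂ) (f : ZMod d × ZMod d × ZMod d → ℂ) :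
    pauliFst d α β (c • f) = c • pauliFst d α β f := by
  funext p
  simp only [pauliFst, Pi.smul_apply, smul_eq_mul]
  ring

lemma pauliFst_GHZ3 (d : ℕ) (α β u₁ u₂ u₃ : ZMod d) :
    pauliFst d α β (GHZ3 d u₁ u₂ u₃) =
      omega d ^ (β * u₁).val • GHZ3 d (u₁ + α) (u₂ + β) (u₃ + β) := by
  funext ⟨j₁, j₂, j₃⟩
  have hsupport : (j₂ = j₁ + β + u₂ ∧ j₃ = j₁ + β + u₃) ↔
      (j₂ = j₁ + (u₂ + β) ∧ j₃ = j₁ + (u₃ + β)) := by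
    simp only [add_right_comm j₁ β, add_assoc]
  simp only [pauliFst, GHZ3, Pi.smul_apply, smul_eq_mul, if_congr hsupport rfl rfl]
  split_ifs
  · rw [add_mul, mul_add, omega_pow_val_add_s7, omega_pow_val_add_s7]
    ring
  · simp

lemma foldl_pauliFst_smul {ι : Type*} (d : ℕ) (α β : ι → ZMod d) (l : List ι) (c : ℂ)
    (f : ZMod d × ZMod d × ZMod d → ℂ) :
    l.foldl (fun f j => pauliFst d (α j) (β j) f) (c • f) =
      c • l.foldl (fun f j => pauliFst d (α j) (β j) f) f :=
  List.foldl_hom (c • ·) fun f j => pauliFst_smul d (α j) (β j) c f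

lemma foldl_pauliFst_GHZ3 {ι : Type*} (d : ℕ) (α β : ι → ZMod d) (l : List ι)
    (u₁ u₂ u₃ : ZMod d) :
    ∃ c : ℂ, ‖c‖ = 1 ∧
      l.foldl (fun f j => pauliFst d (α j) (β j) f) (GHZ3 d u₁ u₂ u₃) =
        c • GHZ3 d (u₁ + (l.map α).sum) (u₂ + (l.map β).sum) (u₃ + (l.map β).sum) := by
  induction l generalizing u₁ u₂ u₃ with
  | nil => exact ⟨1, by simp⟩
  | cons j l ih =>
    obtain ⟨c, hc, h⟩ := ih (u₁ + α j) (u₂ + β j) (u₃ + β j)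
    refine ⟨omega d ^ (β j * u₁).val * c, by simp [hc, norm_omega], ?_⟩
    rw [List.foldl_cons, pauliFst_GHZ3, foldl_pauliFst_smul, h, smul_smul]
    simp only [List.map_cons, List.sum_cons, add_assoc]

theorem pauliFst_iterate_GHZ3_general (d : ℕ) (m : ℕ)
    (α β : Fin m → ZMod d) (u₁ u₂ u₃ : ZMod d) :
    ∃ c : ℂ, ‖c‖ = 1 ∧
      (List.finRange m).foldl (fun f j => pauliFst d (α j) (β j) f) (GHZ3 d u₁ u₂ u₃) =
        c • GHZ3 d (u₁ + ∑ j, α j) (u₂ + ∑ j, β j) (u₃ + ∑ j, β j) := by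
  obtain ⟨c, hc, h⟩ := foldl_pauliFst_GHZ3 d α β (List.finRange m) u₁ u₂ u₃
  exact ⟨c, hc, by rw [h, ← Fin.sum_univ_def, ← Fin.sum_univ_def]⟩

/-- Applying the generalized Pauli operators `U_{α₁,β₁}, …, U_{α_m,β_m}` successively to the
first qudit of the GHZ state `Ψ_{u₁,u₂,u₃}` yields
`c • Ψ_{u₁+Σ α_j, u₂+Σ β_j, u₃+Σ β_j}` for some complex number `c` with `|c| = 1`. -/
theorem pauliFst_iterate_GHZ3 (d : ℕ) (hd : 2 ≤ d) (m : ℕ) (hm : 1 ≤ m)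
    (α β : Fin m → ZMod d) (u₁ u₂ u₃ : ZMod d) :
    ∃ c : ℂ, ‖c‖ = 1 ∧
      (List.finRange m).foldl (fun f j => pauliFst d (α j) (β j) f) (GHZ3 d u₁ u₂ u₃) =
        c • GHZ3 d (u₁ + ∑ j, α j) (u₂ + ∑ j, β j) (u₃ + ∑ j, β j) :=
  pauliFst_iterate_GHZ3_general d m α β u₁ u₂ u₃
end
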